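/- arXiv:2006.09858 — 3 statements merged into one kernel-verified Lean document; each statement's English description precedes it below -/
import Mathlib

section
/- A finite set {x_1,...,x_N} of distinct points in a metric space is ordinally dense (i.e., there exists n_0 such that the maximum distance from x_{n_0} to the other points is at most the minimum pairwise distance among the remaining N-1 points) if and only if its N-th ordinal spread equals C(N-1,2)+1. -/
/-!
Exactly `(N - 1).choose 2` unordered pairs avoid a given index, so the first
`(N - 1).choose 2 + 1` pairs of any enumeration cover all indices. Hence the spread is maximal
iff some index `n₀` is missed by the first `(N - 1).choose 2` pairs, i.e. iff every pair avoiding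
`n₀` precedes every pair containing `n₀`. When the pairs are sorted by decreasing, pairwise
distinct distances, this says precisely that `n₀` witnesses ordinal density.
-/

/-- The `n`-th ordinal spread of a sorted index list `pairs`. -/
noncomputable def ordinalSpread {N : ℕ} (pairs : ℕ → Fin N × Fin N) (n : ℕ) : ℕ :=
  sInf {m | n ≤ ((Finset.range m).biUnion
    (fun r => ({(pairs r).1, (pairs r).2} : Finset (Fin N)))).card}

/-- `pairs` is a list of all unordered index pairs of `[N]` sorted by decreasing distance
of the corresponding points of `x`. -/
def IsSortedIndexList {S : Type*} [MetricSpace S] {N : ℕ} (x : Fin N → S)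
    (pairs : ℕ → Fin N × Fin N) : Prop :=
  (∀ r < N.choose 2, (pairs r).1 ≠ (pairs r).2) ∧
  (∀ i j : Fin N, i ≠ j →
    ∃ r < N.choose 2, ({(pairs r).1, (pairs r).2} : Finset (Fin N)) = {i, j}) ∧
  (∀ r < N.choose 2, ∀ s < N.choose 2, r ≠ s →
    ({(pairs r).1, (pairs r).2} : Finset (Fin N)) ≠ {(pairs s).1, (pairs s).2}) ∧
  (∀ r s, r ≤ s → s < N.choose 2 →
    dist (x (pairs s).1) (x (pairs s).2) ≤ dist (x (pairs r).1) (x (pairs r).2))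

/-- A point configuration is ordinally dense if some point's maximum distance to the
others is at most the minimum pairwise distance among the others. -/
def OrdinallyDense {S : Type*} [MetricSpace S] {N : ℕ} (x : Fin N → S) : Prop :=
  ∃ n₀ : Fin N, ∀ n, n ≠ n₀ → ∀ m k : Fin N, m ≠ n₀ → k ≠ n₀ → m ≠ k →
    dist (x n) (x n₀) ≤ dist (x m) (x k)

open Finset

def pairSet {N : ℕ} (pairs : ℕ → Fin N × Fin N) (r : ℕ) : Finset (Fin N) :=
  {(pairs r).1, (pairs r).2}

def coveredIndices {N : ℕ} (pairs : ℕ → Fin N × Fin N) (m : ℕ) : Finset (Fin N) :=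
  (range m).biUnion (pairSet pairs)

def IsOrdinalCenter {S : Type*} [MetricSpace S] {N : ℕ} (x : Fin N → S) (n₀ : Fin N) : Prop :=
  ∀ n, n ≠ n₀ → ∀ m k : Fin N, m ≠ n₀ → k ≠ n₀ → m ≠ k → dist (x n) (x n₀) ≤ dist (x m) (x k)

lemma dist_eq_of_pair_eq {S α : Type*} [PseudoMetricSpace S] [DecidableEq α] (x : α → S)
    {a b c d : α} (h : ({a, b} : Finset α) = {c, d}) : dist (x a) (x b) = dist (x c) (x d) := by
  have h' : ({a, b} : Set α) = {c, d} := by simpa using congrArg ((↑) : Finset α → Set α) h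
  rcases Set.pair_eq_pair_iff.1 h' with ⟨rfl, rfl⟩ | ⟨rfl, rfl⟩
  · rfl
  · exact dist_comm _ _

lemma choose_two_pred_lt_choose_two {N : ℕ} (hN : 2 ≤ N) : (N - 1).choose 2 < N.choose 2 := by
  obtain ⟨M, rfl⟩ := Nat.exists_eq_add_of_le' hN
  rw [show M + 2 - 1 = M + 1 by omega, Nat.choose_succ_succ' (M + 1) 1]
  simp

section Enumeration

variable {N : ℕ} {pairs : ℕ → Fin N × Fin N}

lemma ordinalSpread_eq_sInf (n : ℕ) :
    ordinalSpread pairs n = sInf {m | n ≤ #(coveredIndices pairs m)} := rfl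

lemma coveredIndices_mono : Monotone (coveredIndices pairs) := fun _ _ h =>
  biUnion_subset_biUnion_of_subset_left _ (range_subset_range.2 h)

lemma ordinalSpread_eq_succ_iff {m : ℕ} (hm : coveredIndices pairs (m + 1) = univ) :
    ordinalSpread pairs N = m + 1 ↔ ∃ n₀, n₀ ∉ coveredIndices pairs m := by
  have hcard : ∀ k, N ≤ #(coveredIndices pairs k) ↔ coveredIndices pairs k = univ := fun k => by
    simpa using (card_lt_iff_ne_univ (coveredIndices pairs k)).not
  rw [ordinalSpread_eq_sInf, Nat.sInf_upward_closed_eq_succ_iff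
    fun _ _ hk h => h.trans (card_le_card (coveredIndices_mono hk))]
  simp [hcard, hm, eq_univ_iff_forall]

variable (hbij : Set.BijOn (pairSet pairs) (Set.Iio (N.choose 2)) {s | #s = 2})
include hbij

lemma card_filter_notMem_pairSet (n₀ : Fin N) :
    #{r ∈ range (N.choose 2) | n₀ ∉ pairSet pairs r} = (N - 1).choose 2 := by
  calc _ = #((univ.erase n₀).powersetCard 2) := by
        refine card_nbij (pairSet pairs) (fun r hr => ?_) (hbij.injOn.mono fun r hr => ?_)
          fun s hs => ?_
        · rw [mem_coe, mem_filter, mem_range] at hr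
          rw [mem_coe, mem_powersetCard]
          exact ⟨fun i hi => mem_erase.2 ⟨fun h => hr.2 (h ▸ hi), mem_univ i⟩,
            hbij.mapsTo (Set.mem_Iio.2 hr.1)⟩
        · rw [mem_coe, mem_filter, mem_range] at hr
          exact hr.1
        · rw [mem_coe, mem_powersetCard] at hs
          obtain ⟨r, hr, rfl⟩ := hbij.surjOn hs.2
          exact ⟨r, by simpa using ⟨hr, fun h => (mem_erase.1 (hs.1 h)).1 rfl⟩, rfl⟩
    _ = (N - 1).choose 2 := by simp

lemma card_le_of_forall_notMem_pairSet {n₀ : Fin N} {T : Finset ℕ}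
    (hT : T ⊆ range (N.choose 2)) (h : ∀ r ∈ T, n₀ ∉ pairSet pairs r) :
    #T ≤ (N - 1).choose 2 :=
  card_filter_notMem_pairSet hbij n₀ ▸ card_le_card fun r hr => mem_filter.2 ⟨hT hr, h r hr⟩

lemma coveredIndices_choose_succ_eq_univ (hN : 2 ≤ N) :
    coveredIndices pairs ((N - 1).choose 2 + 1) = univ := by
  refine eq_univ_of_forall fun n₀ => by_contra fun h => ?_
  have := card_le_of_forall_notMem_pairSet hbij (T := range ((N - 1).choose 2 + 1))
    (range_subset_range.2 (choose_two_pred_lt_choose_two hN))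
    fun r hr hn₀ => h (mem_biUnion.2 ⟨r, hr, hn₀⟩)
  simp at this

end Enumeration

namespace IsSortedIndexList

variable {S : Type*} [MetricSpace S] {N : ℕ} {x : Fin N → S} {pairs : ℕ → Fin N × Fin N}

lemma bijOn (h : IsSortedIndexList x pairs) :
    Set.BijOn (pairSet pairs) (Set.Iio (N.choose 2)) {s | #s = 2} := by
  obtain ⟨hne, hsurj, hinj, -⟩ := h
  refine ⟨fun r hr => card_pair (hne r hr),
    fun r hr s hs hrs => by_contra fun h => hinj r hr s hs h hrs, fun s hs => ?_⟩
  obtain ⟨i, j, hij, rfl⟩ := card_eq_two.1 hs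
  exact hsurj i j hij

lemma dist_le_of_pairSet_eq (h : IsSortedIndexList x pairs) {r s : ℕ} (hrs : r ≤ s)
    (hs : s < N.choose 2) {i j k l : Fin N} (hr' : pairSet pairs r = {i, j})
    (hs' : pairSet pairs s = {k, l}) : dist (x k) (x l) ≤ dist (x i) (x j) := by
  rw [← dist_eq_of_pair_eq x hr', ← dist_eq_of_pair_eq x hs']
  exact h.2.2.2 r s hrs hs

lemma isOrdinalCenter_of_notMem_coveredIndices (h : IsSortedIndexList x pairs) {n₀ : Fin N}
    (hn₀ : n₀ ∉ coveredIndices pairs ((N - 1).choose 2)) : IsOrdinalCenter x n₀ := by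
  intro n hn m k hm hk hmk
  set Q := (N - 1).choose 2
  obtain ⟨r, hr, hr'⟩ := h.bijOn.surjOn (card_pair hn)
  obtain ⟨s, hs, hs'⟩ := h.bijOn.surjOn (card_pair hmk)
  have hQr : Q ≤ r :=
    not_lt.1 fun hrQ => hn₀ (mem_biUnion.2 ⟨r, mem_range.2 hrQ, by simp [hr']⟩)
  -- otherwise the pair at `s` and the first `Q` pairs would be `Q + 1` pairs avoiding `n₀`
  refine h.dist_le_of_pairSet_eq (not_lt.1 fun hrs => ?_) hr hs' hr'
  have hT : insert s (range Q) ⊆ range (N.choose 2) :=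
    insert_subset (mem_range.2 hs) (range_subset_range.2 (Nat.choose_le_choose 2 (N.sub_le 1)))
  have := card_le_of_forall_notMem_pairSet (n₀ := n₀) h.bijOn hT fun t ht => by
    rcases mem_insert.1 ht with rfl | ht
    · simp [hs', hm.symm, hk.symm]
    · exact fun h => hn₀ (mem_biUnion.2 ⟨t, ht, h⟩)
  rw [card_insert_of_notMem (by simp; omega), card_range] at this
  omega

lemma notMem_coveredIndices_of_isOrdinalCenter (h : IsSortedIndexList x pairs)
    (hdd : ∀ i j k l : Fin N, i ≠ j → k ≠ l →
      ({i, j} : Finset (Fin N)) ≠ {k, l} → dist (x i) (x j) ≠ dist (x k) (x l))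
    {n₀ : Fin N} (hc : IsOrdinalCenter x n₀) : n₀ ∉ coveredIndices pairs ((N - 1).choose 2) := by
  simp only [coveredIndices, mem_biUnion, mem_range, not_exists, not_and]
  intro r hrQ hn₀r
  have hrP : r < N.choose 2 := hrQ.trans_le (Nat.choose_le_choose 2 (N.sub_le 1))
  obtain ⟨n, hn, hr'⟩ : ∃ n ≠ n₀, pairSet pairs r = {n, n₀} := by
    have hab := h.1 r hrP
    rcases mem_insert.1 hn₀r with ha | hb
    · exact ⟨(pairs r).2, ha ▸ hab.symm, by rw [ha]; exact pair_comm _ _⟩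
    · rw [mem_singleton] at hb
      exact ⟨(pairs r).1, hb ▸ hab, by rw [hb]; rfl⟩
  -- fewer than `(N - 1).choose 2` positions precede `r`, so some pair avoiding `n₀` follows it
  obtain ⟨s, hs, hrs⟩ : ∃ s ∈ {t ∈ range (N.choose 2) | n₀ ∉ pairSet pairs t}, r ≤ s := by
    by_contra! hlt
    have := card_le_card fun t ht => mem_range.2 (hlt t ht)
    rw [card_filter_notMem_pairSet h.bijOn, card_range] at this
    omega
  obtain ⟨hsP, hn₀s⟩ := mem_filter.1 hs
  have hmk := h.1 s (mem_range.1 hsP)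
  have hm : (pairs s).1 ≠ n₀ := fun h => hn₀s (by simp [pairSet, h])
  have hk : (pairs s).2 ≠ n₀ := fun h => hn₀s (by simp [pairSet, h])
  refine hdd n n₀ _ _ hn hmk (fun heq => hn₀s (by simp [pairSet, ← heq]))
    (le_antisymm (hc n hn _ _ hm hk hmk) (h.dist_le_of_pairSet_eq hrs (mem_range.1 hsP) hr' rfl))

end IsSortedIndexList

theorem ordinally_dense_iff_max_ordinal_spread_general {S : Type*} [MetricSpace S]
    (N : ℕ) (hN : 2 ≤ N) (x : Fin N → S)
    -- all pairwise distances are distinct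
    (hdd : ∀ i j k l : Fin N, i ≠ j → k ≠ l →
      ({i, j} : Finset (Fin N)) ≠ {k, l} → dist (x i) (x j) ≠ dist (x k) (x l))
    (pairs : ℕ → Fin N × Fin N) (hpairs : IsSortedIndexList x pairs) :
    OrdinallyDense x ↔ ordinalSpread pairs N = (N - 1).choose 2 + 1 := by
  rw [ordinalSpread_eq_succ_iff (coveredIndices_choose_succ_eq_univ hpairs.bijOn hN)]
  exact exists_congr fun _ => ⟨hpairs.notMem_coveredIndices_of_isOrdinalCenter hdd,
    hpairs.isOrdinalCenter_of_notMem_coveredIndices⟩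

theorem ordinally_dense_iff_max_ordinal_spread {S : Type*} [MetricSpace S]
    (N : ℕ) (hN : 2 ≤ N) (x : Fin N → S)
    (hx : Function.Injective x)
    -- all pairwise distances are distinct
    (hdd : ∀ i j k l : Fin N, i ≠ j → k ≠ l →
      ({i, j} : Finset (Fin N)) ≠ {k, l} → dist (x i) (x j) ≠ dist (x k) (x l))
    (pairs : ℕ → Fin N × Fin N) (hpairs : IsSortedIndexList x pairs) :
    OrdinallyDense x ↔ ordinalSpread pairs N = (N - 1).choose 2 + 1 :=
  ordinally_dense_iff_max_ordinal_spread_general N hN x hdd pairs hpairs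
end

section
/- For every N ∈ ℕ, there exists an ordinally dense set of N points in the hyperbolic plane; that is, there exist N points such that one of them satisfies: its maximum distance to the other N-1 points is at most the minimum pairwise distance among those N-1 points. Consequently, the ordinal capacity of hyperbolic space is infinite. -/
/-- Inverse hyperbolic cosine (for `1 ≤ x`). -/
noncomputable def arcosh (x : ℝ) : ℝ := Real.log (x + Real.sqrt (x ^ 2 - 1))

/-- Lorentzian inner product on ℝ³. -/
def lorentz (x y : ℝ × ℝ × ℝ) : ℝ :=
  -(x.1 * y.1) + x.2.1 * y.2.1 + x.2.2 * y.2.2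

/-- Hyperbolic distance in the hyperboloid ('Loid) model L². -/
noncomputable def hypDist (x y : ℝ × ℝ × ℝ) : ℝ :=
  arcosh (-(lorentz x y))

/-- Membership in the hyperboloid model L². -/
def onHyperboloid (x : ℝ × ℝ × ℝ) : Prop :=
  lorentz x x = -1 ∧ 0 < x.1

/-!
Put one point at the centre of a hyperbolic circle of radius `r` and the others on that circle,
at angles that are multiples of `π / N` within a half-turn, so that any two of them subtend an angle
`θ ∈ [π / N, π]`. By the hyperbolic law of cosines two such points are at distance `d` with
`cosh d = cosh² r - sinh² r cos θ`, and this is at least `cosh r` as soon as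
`(1 + cosh r) cos (π / N) ≤ cosh r`, which holds for `r` large.
-/

-- The `arcosh` of the statement is `Real.arcosh` by definition.
lemma hypDist_le_hypDist {x y u v : ℝ × ℝ × ℝ} (hxy : 0 < -lorentz x y)
    (h : -lorentz x y ≤ -lorentz u v) : hypDist x y ≤ hypDist u v :=
  (Real.arcosh_le_arcosh hxy (hxy.trans_le h)).2 h

open Real

noncomputable def hypPolar (r θ : ℝ) : ℝ × ℝ × ℝ := (cosh r, sinh r * cos θ, sinh r * sin θ)

lemma onHyperboloid_hypPolar (r θ : ℝ) : onHyperboloid (hypPolar r θ) := by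
  refine ⟨?_, cosh_pos r⟩
  simp only [lorentz, hypPolar]
  linear_combination sinh r ^ 2 * sin_sq_add_cos_sq θ - cosh_sq r

lemma neg_lorentz_hypPolar (a b α β : ℝ) :
    -lorentz (hypPolar a α) (hypPolar b β) = cosh a * cosh b - sinh a * sinh b * cos (α - β) := by
  simp only [lorentz, hypPolar, cos_sub]
  ring

lemma cosh_le_neg_lorentz_hypPolar {r α β : ℝ} (h : (1 + cosh r) * cos (α - β) ≤ cosh r) :
    cosh r ≤ -lorentz (hypPolar r α) (hypPolar r β) := by
  rw [neg_lorentz_hypPolar, ← sq, ← sq, sinh_sq]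
  -- with `c = cosh r`, `t = cos (α - β)`:
  -- `c ^ 2 - (c ^ 2 - 1) * t - c = (c - 1) * (c - (1 + c) * t)`
  nlinarith [mul_nonneg (sub_nonneg.2 (one_le_cosh r)) (sub_nonneg.2 h)]

lemma exists_pos_one_add_cosh_mul_le {t : ℝ} (ht : t < 1) :
    ∃ r, 0 < r ∧ (1 + cosh r) * t ≤ cosh r := by
  set C := 1 + 1 / (1 - t)
  have hC : 1 < C := lt_add_of_pos_right 1 (one_div_pos.2 (sub_pos.2 ht))
  refine ⟨Real.arcosh C, arcosh_pos hC, ?_⟩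
  rw [cosh_arcosh hC.le]
  have : C * (1 - t) = 2 - t := by
    rw [add_mul, one_div_mul_cancel (sub_pos.2 ht).ne']; ring
  nlinarith

lemma cos_sub_le_cos_pi_div {N i j : ℕ} (hi : i ≤ N) (hj : j ≤ N) (hij : i ≠ j) :
    cos (i * π / N - j * π / N) ≤ cos (π / N) := by
  have hN : (0 : ℝ) < N := by exact_mod_cast (show 0 < N by omega)
  have hgap : (1 : ℝ) ≤ |(i : ℝ) - j| := by
    exact_mod_cast Int.one_le_abs (sub_ne_zero.2 (Int.ofNat_inj.not.2 hij))
  have hspan : |(i : ℝ) - j| ≤ N := by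
    have hi' : (i : ℝ) ≤ N := by exact_mod_cast hi
    have hj' : (j : ℝ) ≤ N := by exact_mod_cast hj
    rw [abs_sub_le_iff]
    constructor <;> linarith [(i.cast_nonneg : (0 : ℝ) ≤ i), (j.cast_nonneg : (0 : ℝ) ≤ j)]
  rw [← cos_abs, show i * π / N - j * π / N = ((i : ℝ) - j) * (π / N) by ring, abs_mul,
    abs_of_pos (by positivity : 0 < π / N)]
  apply cos_le_cos_of_nonneg_of_le_pi (by positivity)
  · calc |(i : ℝ) - j| * (π / N) ≤ N * (π / N) := by gcongr
      _ = π := by field_simp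
  · nlinarith [pi_pos, div_pos pi_pos hN]

-- The centre `(1, 0, 0)` is the point of radius `0`; the points `1, …, N` lie on the circle of
-- radius `r`, at angles spaced by `π / N` within `[0, π]`.
noncomputable def fan (N : ℕ) (r : ℝ) (n : ℕ) : ℝ × ℝ × ℝ :=
  hypPolar (if n = 0 then 0 else r) (n * π / N)

section fan

variable {N : ℕ} {r : ℝ}

lemma neg_lorentz_fan_zero {n : ℕ} (hn : n ≠ 0) : -lorentz (fan N r n) (fan N r 0) = cosh r := by
  simp [fan, neg_lorentz_hypPolar, hn]

lemma cosh_le_neg_lorentz_fan (hr : (1 + cosh r) * cos (π / N) ≤ cosh r) {n m : ℕ}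
    (hn : n ≤ N) (hm : m ≤ N) (hn0 : n ≠ 0) (hnm : n ≠ m) :
    cosh r ≤ -lorentz (fan N r n) (fan N r m) := by
  rcases eq_or_ne m 0 with rfl | hm0
  · exact (neg_lorentz_fan_zero hn0).ge
  · simp only [fan, hn0, hm0, if_false]
    apply cosh_le_neg_lorentz_hypPolar
    exact (mul_le_mul_of_nonneg_left (cos_sub_le_cos_pi_div hn hm hnm) (by positivity)).trans hr

lemma injOn_fan (hr0 : 0 < r) (hr : (1 + cosh r) * cos (π / N) ≤ cosh r) :
    Set.InjOn (fan N r) (Set.Iic N) := by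
  intro n hn m hm h
  by_contra hnm
  wlog hn0 : n ≠ 0 generalizing n m
  · exact this hm hn h.symm (Ne.symm hnm) (by omega)
  have hsep := cosh_le_neg_lorentz_fan hr hn hm hn0 hnm
  have hself : lorentz (fan N r m) (fan N r m) = -1 := (onHyperboloid_hypPolar _ _).1
  rw [h, hself, neg_neg] at hsep
  exact (one_lt_cosh.2 hr0.ne').not_ge hsep

end fan

theorem hyperbolic_ordinally_dense_sets_of_all_sizes (N : ℕ) (hN : 1 ≤ N) :
    ∃ x : Fin N → ℝ × ℝ × ℝ,
      (∀ n, onHyperboloid (x n)) ∧ Function.Injective x ∧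
      -- the set is ordinally dense in the hyperbolic plane
      ∃ n₀ : Fin N, ∀ n, n ≠ n₀ → ∀ m k : Fin N, m ≠ n₀ → k ≠ n₀ → m ≠ k →
        hypDist (x n) (x n₀) ≤ hypDist (x m) (x k) := by
  have hcos : cos (π / N) < 1 := by
    simpa using cos_lt_cos_of_nonneg_of_le_pi le_rfl
      (div_le_self pi_pos.le (by exact_mod_cast hN)) (by positivity)
  obtain ⟨r, hr0, hr⟩ := exists_pos_one_add_cosh_mul_le hcos
  refine ⟨fun n => fan N r n, fun n => onHyperboloid_hypPolar _ _,
    fun n m h => Fin.ext (injOn_fan hr0 hr n.isLt.le m.isLt.le h), ⟨0, hN⟩, ?_⟩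
  intro n hn m k hm _ hmk
  have hn0 : (n : ℕ) ≠ 0 := Fin.val_ne_iff.2 hn
  apply hypDist_le_hypDist
  · rw [neg_lorentz_fan_zero hn0]; exact cosh_pos r
  · rw [neg_lorentz_fan_zero hn0]
    exact cosh_le_neg_lorentz_fan hr m.isLt.le k.isLt.le (Fin.val_ne_iff.2 hm)
      (Fin.val_ne_iff.2 hmk)
end

section
/- Let y_1,...,y_{N-1} ∈ ℝ^d with 0 < ‖y_n‖ ≤ 1 for all n, and suppose ‖y_i - y_j‖ ≥ 1 for some i ≠ j. Then the radially projected points x_i = y_i/‖y_i‖ and x_j = y_j/‖y_j‖ satisfy ‖x_i - x_j‖ ≥ ‖y_i - y_j‖. In other words, radial projection onto the unit sphere does not decrease distances between points whose mutual distance is at least 1 and whose norms are at most 1. -/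
/-!
With `a = ‖u‖`, `b = ‖v‖`, expanding both squared norms gives
`a b ‖u/a - v/b‖² = ‖u - v‖² - (a - b)²`. For `a, b ∈ [0, 1]` one has `(a - b)² ≤ 1 - a b`,
and `1 - a b ≤ ‖u - v‖² (1 - a b)` once `‖u - v‖ ≥ 1`; hence `a b ‖u/a - v/b‖² ≥ a b ‖u - v‖²`.
-/

section RadialProjection

variable {E : Type*} [NormedAddCommGroup E] [InnerProductSpace ℝ E]

theorem norm_mul_norm_mul_norm_inv_smul_sub_sq {u v : E} (hu : u ≠ 0) (hv : v ≠ 0) :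
    ‖u‖ * ‖v‖ * ‖‖u‖⁻¹ • u - ‖v‖⁻¹ • v‖ ^ 2 = ‖u - v‖ ^ 2 - (‖u‖ - ‖v‖) ^ 2 := by
  have hu' : ‖u‖ ≠ 0 := norm_ne_zero_iff.mpr hu
  have hv' : ‖v‖ ≠ 0 := norm_ne_zero_iff.mpr hv
  rw [norm_sub_sq_real, norm_sub_sq_real, norm_smul, norm_smul, real_inner_smul_left,
    real_inner_smul_right, norm_inv, norm_norm, norm_inv, norm_norm]
  field_simp
  ring

theorem sq_sub_le_one_sub_mul {a b : ℝ} (ha : 0 ≤ a) (hb : 0 ≤ b) (ha1 : a ≤ 1) (hb1 : b ≤ 1) :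
    (a - b) ^ 2 ≤ 1 - a * b := by
  rcases le_total a b with hab | hab <;>
    nlinarith [mul_nonneg ha (sub_nonneg.mpr hab), mul_nonneg hb (sub_nonneg.mpr hab)]

theorem norm_sub_le_norm_inv_smul_sub {u v : E} (hu : u ≠ 0) (hv : v ≠ 0) (hu1 : ‖u‖ ≤ 1)
    (hv1 : ‖v‖ ≤ 1) (hfar : 1 ≤ ‖u - v‖) : ‖u - v‖ ≤ ‖‖u‖⁻¹ • u - ‖v‖⁻¹ • v‖ := by
  have hab : 0 < ‖u‖ * ‖v‖ := mul_pos (norm_pos_iff.mpr hu) (norm_pos_iff.mpr hv)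
  have hab1 : ‖u‖ * ‖v‖ ≤ 1 := mul_le_one₀ hu1 (norm_nonneg v) hv1
  have hD : 1 ≤ ‖u - v‖ ^ 2 := one_le_pow₀ hfar
  have hsq : ‖u - v‖ ^ 2 ≤ ‖‖u‖⁻¹ • u - ‖v‖⁻¹ • v‖ ^ 2 := by
    refine le_of_mul_le_mul_left ?_ hab
    calc ‖u‖ * ‖v‖ * ‖u - v‖ ^ 2
        ≤ ‖u - v‖ ^ 2 - (1 - ‖u‖ * ‖v‖) := by nlinarith
      _ ≤ ‖u - v‖ ^ 2 - (‖u‖ - ‖v‖) ^ 2 := by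
        gcongr; exact sq_sub_le_one_sub_mul (norm_nonneg u) (norm_nonneg v) hu1 hv1
      _ = _ := (norm_mul_norm_mul_norm_inv_smul_sub_sq hu hv).symm
  exact (pow_le_pow_iff_left₀ (norm_nonneg _) (norm_nonneg _) two_ne_zero).mp hsq

end RadialProjection

theorem radial_projection_expands_far_pairs_general (d N : ℕ)
    (y : Fin (N - 1) → EuclideanSpace ℝ (Fin d))
    (hne : ∀ n, y n ≠ 0) (hnorm : ∀ n, ‖y n‖ ≤ 1)
    (i j : Fin (N - 1)) (hfar : 1 ≤ ‖y i - y j‖) :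
    ‖y i - y j‖ ≤ ‖(‖y i‖⁻¹) • y i - (‖y j‖⁻¹) • y j‖ :=
  norm_sub_le_norm_inv_smul_sub (hne i) (hne j) (hnorm i) (hnorm j) hfar

theorem radial_projection_expands_far_pairs (d N : ℕ)
    (y : Fin (N - 1) → EuclideanSpace ℝ (Fin d))
    (hne : ∀ n, y n ≠ 0) (hnorm : ∀ n, ‖y n‖ ≤ 1)
    (i j : Fin (N - 1)) (hij : i ≠ j) (hfar : 1 ≤ ‖y i - y j‖) :
    ‖y i - y j‖ ≤ ‖(‖y i‖⁻¹) • y i - (‖y j‖⁻¹) • y j‖ :=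
  radial_projection_expands_far_pairs_general d N y hne hnorm i j hfar
end
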